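/- Let F ∈ ℚ[x,y][[t]] be the unique solution of F = 1 + t(x+y)F + tΔₓF + tΔ_yF, and set S := x + y + 1/x + 1/y ∈ ℚ(x,y). Then, in ℚ(x,y)[[t]], xy·F(x,y;t) − (y/x)·F(1/x,y;t) + (1/(xy))·F(1/x,1/y;t) − (x/y)·F(x,1/y;t) = (xy − y/x + 1/(xy) − x/y)·(1 − tS)^{−1}, where 1 − tS is invertible in ℚ(x,y)[[t]] because its constant coefficient is 1. -/

import Mathlib

/-! Evaluating the functional equation at `(a, b)` and clearing the discrete derivatives gives the
kernel equation `ab·(1 - t·S(a,b))·F(a,b) = ab - t·b·F(0,b) - t·a·F(a,0)`, with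
`S(a,b) = a + b + 1/a + 1/b`. The kernel `S` is invariant under `a ↦ 1/a` and `b ↦ 1/b`, so the
alternating sum of the kernel equations over the orbit `(x,y), (1/x,y), (1/x,1/y), (x,1/y)` has
`(1 - tS)` times the orbit sum on the left, while the boundary terms `F(0,·)` and `F(·,0)` cancel
in pairs on the right. -/

open MvPolynomial

noncomputable section

/-- The ring `ℚ[x,y]`, with `x = X 0` and `y = X 1`. -/
abbrev R2 : Type := MvPolynomial (Fin 2) ℚ

/-- The field `ℚ(x,y)` of rational functions. -/
abbrev K2 : Type := FractionRing R2

/-- The embedding `ℚ[x,y] → ℚ(x,y)`. -/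
def φ : R2 →+* K2 := algebraMap R2 K2

/-- The substitution homomorphism `ℚ[x,y] → ℚ(x,y)`, `x ↦ a`, `y ↦ b`. -/
def sub (a b : K2) : R2 →+* K2 := eval₂Hom (φ.comp (C : ℚ →+* R2)) ![a, b]

/-- The substitution `x ↦ 0` on `ℚ[x,y]`. -/
def subX0 : R2 →+* R2 := (aeval ![0, X 1] : R2 →ₐ[ℚ] R2).toRingHom

/-- The substitution `y ↦ 0` on `ℚ[x,y]`. -/
def subY0 : R2 →+* R2 := (aeval ![X 0, 0] : R2 →ₐ[ℚ] R2).toRingHom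

local notation "Cₖ" => (PowerSeries.C : K2 →+* PowerSeries K2)

theorem PowerSeries.map_map {R S T : Type*} [CommSemiring R] [CommSemiring S] [CommSemiring T]
    (f : R →+* S) (g : S →+* T) (p : PowerSeries R) :
    PowerSeries.map g (PowerSeries.map f p) = PowerSeries.map (g.comp f) p := by
  rw [PowerSeries.map_comp, RingHom.comp_apply]

@[simp] lemma sub_X0 (a b : K2) : sub a b (X 0) = a := by simp [sub]

@[simp] lemma sub_X1 (a b : K2) : sub a b (X 1) = b := by simp [sub]

lemma sub_comp_subX0 (a b : K2) : (sub a b).comp subX0 = sub 0 b := by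
  ext i
  · simp [sub, subX0]
  · fin_cases i <;> simp [sub, subX0]

lemma sub_comp_subY0 (a b : K2) : (sub a b).comp subY0 = sub a 0 := by
  ext i
  · simp [sub, subY0]
  · fin_cases i <;> simp [sub, subY0]

lemma sub_X_X : sub (φ (X 0)) (φ (X 1)) = φ := by
  ext i
  · simp [sub]
  · fin_cases i <;> simp [sub]

lemma φ_X_ne_zero (i : Fin 2) : φ (X i) ≠ 0 :=
  (map_ne_zero_iff φ (IsFractionRing.injective R2 K2)).mpr (X_ne_zero i)

section KernelMethod

variable {Dx Dy : PowerSeries R2 → PowerSeries R2}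
  (hDx : ∀ G : PowerSeries R2,
    (PowerSeries.C : R2 →+* PowerSeries R2) (X 0) * Dx G = G - PowerSeries.map subX0 G)
  (hDy : ∀ G : PowerSeries R2,
    (PowerSeries.C : R2 →+* PowerSeries R2) (X 1) * Dy G = G - PowerSeries.map subY0 G)
  {F : PowerSeries R2}
  (hF : F = 1 + PowerSeries.X * (PowerSeries.C : R2 →+* PowerSeries R2) (X 0 + X 1) * F +
    PowerSeries.X * Dx F + PowerSeries.X * Dy F)
include hDx hDy hF

theorem kernel_equation {a b : K2} (ha : a ≠ 0) (hb : b ≠ 0) :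
    Cₖ (a * b) * (1 - PowerSeries.X * Cₖ (a + b + a⁻¹ + b⁻¹)) * PowerSeries.map (sub a b) F =
      Cₖ (a * b) - PowerSeries.X * Cₖ b * PowerSeries.map (sub 0 b) F -
        PowerSeries.X * Cₖ a * PowerSeries.map (sub a 0) F := by
  have hF' := congrArg (PowerSeries.map (sub a b)) hF
  have hDx' := congrArg (PowerSeries.map (sub a b)) (hDx F)
  have hDy' := congrArg (PowerSeries.map (sub a b)) (hDy F)
  simp only [map_add, map_mul, map_one, map_sub, PowerSeries.map_X, PowerSeries.map_C,
    PowerSeries.map_map, sub_comp_subX0, sub_comp_subY0, sub_X0, sub_X1] at hF' hDx' hDy'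
  have hS : a * b * (a + b + a⁻¹ + b⁻¹) = a * b * (a + b) + a + b := by field_simp; ring
  rw [mul_sub, mul_one, mul_left_comm, ← map_mul, hS]
  simp only [map_add, map_mul]
  linear_combination (Cₖ a * Cₖ b) * hF' + PowerSeries.X * Cₖ b * hDx' + PowerSeries.X * Cₖ a * hDy'

end KernelMethod

/-- Let `F ∈ ℚ[x,y][[t]]` be the (unique) solution of
`F = 1 + t(x+y)F + tΔₓF + tΔ_yF`, and `S = x + y + 1/x + 1/y ∈ ℚ(x,y)`. Then, in
`ℚ(x,y)[[t]]`, the orbit-sum identity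
`xy·F(x,y;t) − (y/x)·F(1/x,y;t) + (1/(xy))·F(1/x,1/y;t) − (x/y)·F(x,1/y;t)
  = (xy − y/x + 1/(xy) − x/y)·(1 − tS)⁻¹` holds, the inverse being taken in the
power series ring over the field `ℚ(x,y)`. Here `Dx` and `Dy` are the discrete
derivatives, characterized by `x·ΔₓF = F − F(0,y;t)` and `y·Δ_yF = F − F(x,0;t)`. -/
theorem stmt10
    (Dx Dy : PowerSeries R2 → PowerSeries R2)
    (hDx : ∀ G : PowerSeries R2,
      (PowerSeries.C : R2 →+* PowerSeries R2) (X 0) * Dx G = G - PowerSeries.map subX0 G)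
    (hDy : ∀ G : PowerSeries R2,
      (PowerSeries.C : R2 →+* PowerSeries R2) (X 1) * Dy G = G - PowerSeries.map subY0 G)
    (F : PowerSeries R2)
    (hF : F = 1 + PowerSeries.X * (PowerSeries.C : R2 →+* PowerSeries R2) (X 0 + X 1) * F +
      PowerSeries.X * Dx F + PowerSeries.X * Dy F) :
    (PowerSeries.C : K2 →+* PowerSeries K2) (φ (X 0) * φ (X 1)) * PowerSeries.map φ F -
      (PowerSeries.C : K2 →+* PowerSeries K2) (φ (X 1) / φ (X 0)) *
        PowerSeries.map (sub (φ (X 0))⁻¹ (φ (X 1))) F +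
      (PowerSeries.C : K2 →+* PowerSeries K2) (1 / (φ (X 0) * φ (X 1))) *
        PowerSeries.map (sub (φ (X 0))⁻¹ (φ (X 1))⁻¹) F -
      (PowerSeries.C : K2 →+* PowerSeries K2) (φ (X 0) / φ (X 1)) *
        PowerSeries.map (sub (φ (X 0)) (φ (X 1))⁻¹) F =
    (PowerSeries.C : K2 →+* PowerSeries K2)
        (φ (X 0) * φ (X 1) - φ (X 1) / φ (X 0) + 1 / (φ (X 0) * φ (X 1)) -
          φ (X 0) / φ (X 1)) *
      (1 - PowerSeries.X * (PowerSeries.C : K2 →+* PowerSeries K2)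
          (φ (X 0) + φ (X 1) + (φ (X 0))⁻¹ + (φ (X 1))⁻¹))⁻¹ := by
  have hx := φ_X_ne_zero 0
  have hy := φ_X_ne_zero 1
  set x := φ (X 0)
  set y := φ (X 1)
  have e1 := kernel_equation hDx hDy hF hx hy
  have e2 := kernel_equation hDx hDy hF (inv_ne_zero hx) hy
  have e3 := kernel_equation hDx hDy hF (inv_ne_zero hx) (inv_ne_zero hy)
  have e4 := kernel_equation hDx hDy hF hx (inv_ne_zero hy)
  rw [sub_X_X] at e1
  simp only [inv_inv] at e2 e3 e4
  rw [PowerSeries.eq_mul_inv_iff_mul_eq (by simp)]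
  simp only [div_eq_mul_inv, one_mul, mul_inv, map_sub, map_add, map_mul] at e1 e2 e3 e4 ⊢
  linear_combination e1 - e2 + e3 - e4
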